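/- Let G be a group, A a left G-module (an abelian group with G-action by additive automorphisms), and suppose for each nonidentity conjugacy class α of G a representative σ_α ∈ α is chosen. Then Wh₁⁺(G;A), the coinvariants of the diagonal G-action on A[G]/A[e], is isomorphic as an abelian group to the direct sum over the nonidentity conjugacy classes α of the coinvariants A_{C(σ_α)} of the action of the centralizer C(σ_α) on A. -/

import Mathlib

open scoped DirectSum

/-- The diagonal action of `σ : G` on `A[G] = G →₀ A`, sending `f` to
`τ ↦ σ • f (σ⁻¹ * τ * σ)`. -/
noncomputable def diagHom (G : Type*) [Group G] (A : Type*) [AddCommGroup A]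
    [DistribMulAction G A] (σ : G) : (G →₀ A) →+ (G →₀ A) :=
  (Finsupp.mapDomain.addMonoidHom fun x => σ * x * σ⁻¹).comp
    (Finsupp.mapRange.addMonoidHom (DistribMulAction.toAddMonoidHom A σ))

/-- The subgroup `A[e]` of `A[G] = G →₀ A` consisting of functions supported at the
identity element of `G`. -/
def suppAtOne (G : Type*) [Group G] (A : Type*) [AddCommGroup A] :
    AddSubgroup (G →₀ A) where
  carrier := {f | (f.support : Set G) ⊆ ({1} : Set G)}
  zero_mem' := by simp
  add_mem' := by
    classical
    intro f g hf hg τ hτ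
    have h : τ ∈ f.support ∪ g.support := Finsupp.support_add (Finset.mem_coe.mp hτ)
    rcases Finset.mem_union.mp h with h' | h'
    · exact hf h'
    · exact hg h'
  neg_mem' := by
    intro f hf
    simpa using hf

/-- The diagonal `G`-action descends to the quotient `A[G]/A[e]`. -/
noncomputable def qAct (G : Type*) [Group G] (A : Type*) [AddCommGroup A]
    [DistribMulAction G A] (σ : G) :
    ((G →₀ A) ⧸ suppAtOne G A) →+ ((G →₀ A) ⧸ suppAtOne G A) :=
  QuotientAddGroup.map _ _ (diagHom G A σ) (by
    classical
    intro f hf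
    simp only [AddSubgroup.mem_comap]
    intro τ hτ
    have h1 : τ ∈ (Finsupp.mapDomain (fun x => σ * x * σ⁻¹)
        (Finsupp.mapRange (fun a => σ • a) (smul_zero σ) f)).support :=
      Finset.mem_coe.mp hτ
    have h2 := Finsupp.mapDomain_support h1
    rcases Finset.mem_image.mp h2 with ⟨x, hx, rfl⟩
    have hx' : x ∈ f.support := Finsupp.support_mapRange hx
    have : x ∈ ({1} : Set G) := hf hx'
    simp only [Set.mem_singleton_iff] at this
    subst this
    simp)

/-- The subgroup of `A[G]/A[e]` generated by all `σ · x − x`, so that the quotient by it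
is the group of coinvariants `Wh₁⁺(G;A)`. -/
noncomputable def whRel (G : Type*) [Group G] (A : Type*) [AddCommGroup A]
    [DistribMulAction G A] : AddSubgroup ((G →₀ A) ⧸ suppAtOne G A) :=
  AddSubgroup.closure
    {x | ∃ (σ : G) (q : (G →₀ A) ⧸ suppAtOne G A), x = qAct G A σ q - q}

/-- `Wh₁⁺(G;A)`: the coinvariants of the diagonal `G`-action on `A[G]/A[e]`. -/
noncomputable abbrev Wh1Plus (G : Type*) [Group G] (A : Type*) [AddCommGroup A]
    [DistribMulAction G A] :=
  ((G →₀ A) ⧸ suppAtOne G A) ⧸ whRel G A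

/-- The subgroup of `A` generated by the elements `τ • a − a` with `τ` in the centralizer
`C(σ)`; the quotient by it is the group of coinvariants `A_{C(σ)}`. -/
noncomputable def centRel (G : Type*) [Group G] (A : Type*) [AddCommGroup A]
    [DistribMulAction G A] (σ : G) : AddSubgroup A :=
  AddSubgroup.closure
    {x | ∃ τ ∈ Subgroup.centralizer ({σ} : Set G), ∃ a : A, x = τ • a - a}

/-!
The diagonal action moves the summand `A·τ` of `A[G]` to `A·(στσ⁻¹)`, so the coinvariants
split over the conjugacy classes. In the summand of a class with representative `σ`, the element
`a·τ` with `τ = gσg⁻¹` is identified with `(g⁻¹ • a)·σ`; since `g` is determined up to right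
multiplication by `C(σ)`, the class of `g⁻¹ • a` in `A_{C(σ)}` is well defined, and this
identifies the summand with `A_{C(σ)}`. The inverse sends the class of `a` to `a·σ`, which is
well defined because `C(σ)` fixes `σ` under conjugation.
-/

open Finsupp

section

open scoped Classical

variable {G : Type*} [Group G] {A : Type*} [AddCommGroup A]

lemma mem_suppAtOne_iff {f : G →₀ A} : f ∈ suppAtOne G A ↔ f = single 1 (f 1) := by
  rw [← support_subset_singleton, ← Finset.coe_subset, Finset.coe_singleton]
  rfl

lemma single_one_mem_suppAtOne (a : A) : single (1 : G) a ∈ suppAtOne G A :=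
  mem_suppAtOne_iff.mpr (by simp)

variable [DistribMulAction G A]

lemma diagHom_single (σ τ : G) (a : A) :
    diagHom G A σ (single τ a) = single (σ * τ * σ⁻¹) (σ • a) := by
  simp [diagHom, mapDomain_single]

lemma mk_smul_eq_of_mem_centralizer {σ h : G} (hh : h ∈ Subgroup.centralizer {σ}) (a : A) :
    (QuotientAddGroup.mk (h • a) : A ⧸ centRel G A σ) = QuotientAddGroup.mk a :=
  QuotientAddGroup.eq_iff_sub_mem.mpr (AddSubgroup.subset_closure ⟨h, hh, a, rfl⟩)

lemma inv_mul_mem_centralizer_of_conj_eq {σ g h : G} (hgh : g * σ * g⁻¹ = h * σ * h⁻¹) :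
    g⁻¹ * h ∈ Subgroup.centralizer {σ} := by
  rw [Subgroup.mem_centralizer_singleton_iff]
  calc g⁻¹ * h * σ = g⁻¹ * (h * σ * h⁻¹) * h := by group
    _ = σ * (g⁻¹ * h) := by rw [← hgh]; group

namespace Wh1Plus

noncomputable def mk : (G →₀ A) →+ Wh1Plus G A :=
  (QuotientAddGroup.mk' (whRel G A)).comp (QuotientAddGroup.mk' (suppAtOne G A))

lemma mk_single_one (a : A) : mk (single (1 : G) a) = 0 := by
  simp [mk, (QuotientAddGroup.eq_zero_iff _).mpr (single_one_mem_suppAtOne a)]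

lemma mk_single_conj (g τ : G) (a : A) :
    mk (single (g * τ * g⁻¹) (g • a)) = mk (single τ a) := by
  rw [← diagHom_single, mk, AddMonoidHom.comp_apply, AddMonoidHom.comp_apply,
    QuotientAddGroup.mk'_apply, QuotientAddGroup.mk'_apply, QuotientAddGroup.mk'_apply,
    QuotientAddGroup.mk'_apply, QuotientAddGroup.eq_iff_sub_mem]
  exact AddSubgroup.subset_closure ⟨g, _, rfl⟩

lemma hom_ext {M : Type*} [AddMonoid M] {f g : Wh1Plus G A →+ M}
    (h : ∀ τ a, f (mk (single τ a)) = g (mk (single τ a))) : f = g :=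
  QuotientAddGroup.addMonoidHom_ext _ <| QuotientAddGroup.addMonoidHom_ext _ <|
    Finsupp.addHom_ext h

noncomputable def lift {M : Type*} [AddGroup M] (φ : (G →₀ A) →+ M)
    (h_one : ∀ a, φ (single 1 a) = 0)
    (h_conj : ∀ g τ a, φ (single (g * τ * g⁻¹) (g • a)) = φ (single τ a)) :
    Wh1Plus G A →+ M :=
  QuotientAddGroup.lift _
    (QuotientAddGroup.lift _ φ fun f hf => by
      rw [AddMonoidHom.mem_ker, mem_suppAtOne_iff.mp hf, h_one])
    ((AddSubgroup.closure_le _).mpr <| by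
      rintro _ ⟨σ, q, rfl⟩
      induction q using QuotientAddGroup.induction_on with | H f => ?_
      have hφ : φ.comp (diagHom G A σ) = φ := Finsupp.addHom_ext fun τ a => by
        rw [AddMonoidHom.comp_apply, diagHom_single, h_conj]
      simp only [SetLike.mem_coe, AddMonoidHom.mem_ker, map_sub, sub_eq_zero, qAct,
        QuotientAddGroup.map_mk, QuotientAddGroup.lift_mk]
      exact DFunLike.congr_fun hφ f)

lemma lift_mk {M : Type*} [AddGroup M] (φ : (G →₀ A) →+ M) (h_one h_conj) (f : G →₀ A) :
    lift φ h_one h_conj (mk f) = φ f :=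
  rfl

noncomputable def ofCoinv (σ : G) : A ⧸ centRel G A σ →+ Wh1Plus G A :=
  QuotientAddGroup.lift _ (mk.comp (singleAddHom σ)) <|
    (AddSubgroup.closure_le _).mpr <| by
      rintro _ ⟨h, hh, a, rfl⟩
      have hfix : h * σ * h⁻¹ = σ := by
        rw [Subgroup.mem_centralizer_singleton_iff.mp hh, mul_inv_cancel_right]
      rw [SetLike.mem_coe, AddMonoidHom.mem_ker, map_sub, sub_eq_zero, AddMonoidHom.comp_apply,
        AddMonoidHom.comp_apply, singleAddHom_apply, singleAddHom_apply]
      conv_lhs => rw [← hfix]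
      exact mk_single_conj h σ a

lemma ofCoinv_mk (σ : G) (a : A) : ofCoinv σ (QuotientAddGroup.mk a) = mk (single σ a) :=
  rfl

end Wh1Plus

/-- For `τ = gσg⁻¹` this is `a ↦ [g⁻¹ • a]`, independently of `g` (`conjCoinv_apply`); it is
`0` when `τ` is not conjugate to `σ`. -/
noncomputable def conjCoinv (σ τ : G) : A →+ A ⧸ centRel G A σ :=
  if h : IsConj σ τ then
    (QuotientAddGroup.mk' _).comp
      (DistribSMul.toAddMonoidHom A (Classical.choose (isConj_iff.mp h))⁻¹)
  else 0

lemma conjCoinv_apply {σ τ g : G} (hg : g * σ * g⁻¹ = τ) (a : A) :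
    conjCoinv σ τ a = QuotientAddGroup.mk (g⁻¹ • a) := by
  have h : IsConj σ τ := isConj_iff.mpr ⟨g, hg⟩
  set g' := Classical.choose (isConj_iff.mp h)
  have hg' : g' * σ * g'⁻¹ = τ := Classical.choose_spec (isConj_iff.mp h)
  rw [conjCoinv, dif_pos h, AddMonoidHom.comp_apply, QuotientAddGroup.mk'_apply,
    DistribSMul.toAddMonoidHom_apply, ← mk_smul_eq_of_mem_centralizer
      (inv_mul_mem_centralizer_of_conj_eq (hg.trans hg'.symm)), smul_smul, mul_assoc,
    mul_inv_cancel, mul_one]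

abbrev NontrivialConjClasses (G : Type*) [Group G] :=
  {c : ConjClasses G // c ≠ ConjClasses.mk (1 : G)}

def NontrivialConjClasses.mk {τ : G} (hτ : τ ≠ 1) : NontrivialConjClasses G :=
  ⟨ConjClasses.mk τ, fun h => hτ (isConj_one_right.mp (ConjClasses.mk_eq_mk_iff_isConj.mp h.symm))⟩

section Representatives

variable (rep : NontrivialConjClasses G → G)

noncomputable def toClassSummand (τ : G) :
    A →+ ⨁ c : NontrivialConjClasses G, A ⧸ centRel G A (rep c) :=
  if h : τ = 1 then 0 else
    (DirectSum.of (fun c => A ⧸ centRel G A (rep c)) (NontrivialConjClasses.mk h)).comp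
      (conjCoinv _ τ)

lemma toClassSummand_one : toClassSummand (A := A) rep 1 = 0 :=
  dif_pos rfl

noncomputable def Wh1Plus.ofDirectSum :
    (⨁ c : NontrivialConjClasses G, A ⧸ centRel G A (rep c)) →+ Wh1Plus G A :=
  DirectSum.toAddMonoid (γ := Wh1Plus G A) fun c => Wh1Plus.ofCoinv (rep c)

lemma Wh1Plus.ofDirectSum_of_mk (c : NontrivialConjClasses G) (a : A) :
    Wh1Plus.ofDirectSum rep (DirectSum.of _ c (QuotientAddGroup.mk a)) =
      Wh1Plus.mk (single (rep c) a) := by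
  rw [Wh1Plus.ofDirectSum, DirectSum.toAddMonoid_of, Wh1Plus.ofCoinv_mk]

variable {rep} (hrep : ∀ c, ConjClasses.mk (rep c) = (c : ConjClasses G))
include hrep

lemma toClassSummand_apply {c : NontrivialConjClasses G} {g τ : G} (hg : g * rep c * g⁻¹ = τ)
    (a : A) : toClassSummand rep τ a = DirectSum.of _ c (QuotientAddGroup.mk (g⁻¹ • a)) := by
  have hcls : ConjClasses.mk τ = c := by
    rw [← hrep c, ← hg]
    exact ConjClasses.mk_eq_mk_iff_isConj.mpr (isConj_iff.mpr ⟨g⁻¹, by group⟩)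
  have hτ : τ ≠ 1 := by
    rintro rfl
    exact c.2 hcls.symm
  obtain rfl : NontrivialConjClasses.mk hτ = c := Subtype.ext hcls
  rw [toClassSummand, dif_neg hτ, AddMonoidHom.comp_apply, conjCoinv_apply hg]

lemma exists_conj_rep_eq {τ : G} (hτ : τ ≠ 1) :
    ∃ c : NontrivialConjClasses G, ∃ g : G, g * rep c * g⁻¹ = τ :=
  ⟨NontrivialConjClasses.mk hτ,
    isConj_iff.mp (ConjClasses.mk_eq_mk_iff_isConj.mp (hrep (NontrivialConjClasses.mk hτ)))⟩

noncomputable def Wh1Plus.toDirectSum :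
    Wh1Plus G A →+ ⨁ c : NontrivialConjClasses G, A ⧸ centRel G A (rep c) :=
  Wh1Plus.lift (liftAddHom (toClassSummand rep))
    (fun a => by rw [liftAddHom_apply_single, toClassSummand_one, AddMonoidHom.zero_apply])
    (fun g τ a => by
      simp only [liftAddHom_apply_single]
      obtain rfl | hτ := eq_or_ne τ 1
      · simp [toClassSummand_one]
      obtain ⟨c, h, rfl⟩ := exists_conj_rep_eq hrep hτ
      rw [toClassSummand_apply hrep (c := c) (g := g * h) (by group), toClassSummand_apply hrep rfl,
        mul_inv_rev, mul_smul, inv_smul_smul])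

lemma Wh1Plus.toDirectSum_mk_single (τ : G) (a : A) :
    Wh1Plus.toDirectSum hrep (Wh1Plus.mk (single τ a)) = toClassSummand rep τ a := by
  rw [Wh1Plus.toDirectSum, Wh1Plus.lift_mk, liftAddHom_apply_single]

end Representatives

end

/-- Given a choice of representative `σ_α` for each nonidentity conjugacy class `α` of `G`,
`Wh₁⁺(G;A)` is isomorphic to the direct sum, over the nonidentity conjugacy classes `α`,
of the coinvariants `A_{C(σ_α)}`. -/
theorem stmt5 {G : Type*} [Group G] {A : Type*} [AddCommGroup A] [DistribMulAction G A]
    (rep : {c : ConjClasses G // c ≠ ConjClasses.mk (1 : G)} → G)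
    (hrep : ∀ c, ConjClasses.mk (rep c) = (c : ConjClasses G)) :
    Nonempty (Wh1Plus G A ≃+
      ⨁ c : {c : ConjClasses G // c ≠ ConjClasses.mk (1 : G)}, A ⧸ centRel G A (rep c)) := by
  classical
  refine ⟨AddMonoidHom.toAddEquiv (Wh1Plus.toDirectSum hrep) (Wh1Plus.ofDirectSum rep) ?_ ?_⟩
  · refine Wh1Plus.hom_ext fun τ a => ?_
    rw [AddMonoidHom.comp_apply, AddMonoidHom.id_apply]
    obtain rfl | hτ := eq_or_ne τ 1
    · rw [Wh1Plus.mk_single_one, map_zero, map_zero]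
    obtain ⟨c, g, rfl⟩ := exists_conj_rep_eq hrep hτ
    rw [Wh1Plus.toDirectSum_mk_single, toClassSummand_apply hrep rfl, Wh1Plus.ofDirectSum_of_mk,
      ← Wh1Plus.mk_single_conj g, smul_inv_smul]
  · refine DirectSum.addHom_ext fun c x => ?_
    induction x using QuotientAddGroup.induction_on with | H a => ?_
    rw [AddMonoidHom.comp_apply, AddMonoidHom.id_apply, Wh1Plus.ofDirectSum_of_mk,
      Wh1Plus.toDirectSum_mk_single, toClassSummand_apply hrep (c := c) (g := 1) (by group),
      inv_one, one_smul]
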